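/- Under the hypotheses of the null-plane characteristic problem (2R_u = P_x + Q_y + R_z, P_z = R_x, Q_z = R_y, C³ fields periodic in x,y), the derived identity ∫_{u+z=T}(2R_x² + 2R_y² + R_z² + P_x² + Q_x² + P_y² + Q_y²) dΣ_T = 2∫_{Σ_u}(R_x² + R_y² + R_z²) dΣ_u + ∫_{Σ_z}(−R_z² + P_x² + Q_x² + P_y² + Q_y²) dΣ_z holds, and consequently ∫_{Σ_T}(R_x² + R_y² + R_z² + P_x² + Q_x² + P_y² + Q_y²) dΣ_T ≤ 2(∫_{Σ_u}(R_x²+R_y²+R_z²) dΣ_u + ∫_{Σ_z}(P_x²+Q_x²+P_y²+Q_y²) dΣ_z). -/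

import Mathlib

/-!
Differentiating the system shows that each triple `(∂ₐR, ∂ₐP, ∂ₐQ)` of first derivatives solves it
again. Any solution `(r, p, q)` obeys the local conservation law
`∂ᵤ(2r²) + ∂_z(p² + q² - r²) = ∂ₓ(2rp) + ∂_y(2rq)`. Integrated over the periodic `(x, y)`-cell the
`x`- and `y`-divergences vanish, and integrating the remaining two-dimensional conservation law over
the triangle `u, z ≥ 0, u + z ≤ T` (Fubini on the triangle plus the fundamental theorem of calculus)
equates the flux through `u + z = T` with the fluxes through `u = 0` and `z = 0`. Summing over
`a = x, y, z` and substituting `P_z = R_x`, `Q_z = R_y` gives the identity; the estimate follows by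
dropping `R_x² + R_y²` on the left and `-R_z²` on the right.
-/

/-- Partial derivative in the `a`-th coordinate direction of `ℝ⁴`. -/
noncomputable def pd (a : Fin 4) (f : (Fin 4 → ℝ) → ℝ) (x : Fin 4 → ℝ) : ℝ :=
  fderiv ℝ f x (Pi.single a 1)

open MeasureTheory Set Function

section PartialDerivatives

variable {f g : (Fin 4 → ℝ) → ℝ} {a : Fin 4} {x : Fin 4 → ℝ}

theorem contDiff_pd {m n : WithTop ℕ∞} (hf : ContDiff ℝ n f) (hmn : m + 1 ≤ n) (a : Fin 4) :
    ContDiff ℝ m (pd a f) :=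
  (ContinuousLinearMap.apply ℝ ℝ (Pi.single a 1 : Fin 4 → ℝ)).contDiff.comp (hf.fderiv_right hmn)

theorem continuous_pd (hf : ContDiff ℝ 1 f) (a : Fin 4) : Continuous (pd a f) :=
  (contDiff_pd (m := 0) hf le_rfl a).continuous

theorem differentiable_pd (hf : ContDiff ℝ 2 f) (a : Fin 4) : Differentiable ℝ (pd a f) :=
  (contDiff_pd (m := 1) hf le_rfl a).differentiable one_ne_zero

theorem pd_const (c : ℝ) : pd a (fun _ => c) x = 0 := by simp [pd]

theorem pd_fun_add (hf : DifferentiableAt ℝ f x) (hg : DifferentiableAt ℝ g x) :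
    pd a (fun y => f y + g y) x = pd a f x + pd a g x := by
  simp [pd, fderiv_fun_add hf hg]

theorem pd_fun_sub (hf : DifferentiableAt ℝ f x) (hg : DifferentiableAt ℝ g x) :
    pd a (fun y => f y - g y) x = pd a f x - pd a g x := by
  simp [pd, fderiv_fun_sub hf hg]

theorem pd_fun_mul (hf : DifferentiableAt ℝ f x) (hg : DifferentiableAt ℝ g x) :
    pd a (fun y => f y * g y) x = pd a f x * g x + f x * pd a g x := by
  simp [pd, fderiv_fun_mul hf hg]; ring

theorem pd_fun_sq (hf : DifferentiableAt ℝ f x) :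
    pd a (fun y => f y ^ 2) x = 2 * f x * pd a f x := by
  simp [pd, fderiv_fun_pow 2 hf]

theorem pd_comm (hf : ContDiff ℝ 2 f) (a b : Fin 4) (x : Fin 4 → ℝ) :
    pd a (pd b f) x = pd b (pd a f) x := by
  have hd : DifferentiableAt ℝ (fderiv ℝ f) x :=
    (hf.fderiv_right (m := 1) le_rfl).differentiable one_ne_zero x
  have hsnd : ∀ c d : Fin 4,
      pd c (pd d f) x = fderiv ℝ (fderiv ℝ f) x (Pi.single c 1) (Pi.single d 1) := by
    intro c d
    rw [pd, show pd d f = fun y => fderiv ℝ f y (Pi.single d 1) from rfl,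
      fderiv_clm_apply hd (differentiableAt_const _)]
    simp
  rw [hsnd, hsnd]
  exact hf.contDiffAt.isSymmSndFDerivAt (by simp) _ _

theorem periodic_pd {v : Fin 4 → ℝ} (hf : Periodic f v) (a : Fin 4) :
    Periodic (pd a f) v := fun x => by
  rw [pd, ← fderiv_comp_add_right, show (fun y => f (y + v)) = f from funext hf, pd]

theorem hasDerivAt_pd_update (hf : Differentiable ℝ f) (x : Fin 4 → ℝ) (a : Fin 4) (t : ℝ) :
    HasDerivAt (fun s => f (update x a s)) (pd a f (update x a t)) t :=
  (hf _).hasFDerivAt.comp_hasDerivAt t (hasDerivAt_update x a t)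

theorem integral_pd_update_eq_zero (hf : ContDiff ℝ 1 f) (hper : Periodic f (Pi.single a 1))
    (x : Fin 4 → ℝ) : ∫ t in (0:ℝ)..1, pd a f (update x a t) = 0 := by
  have hcont : Continuous fun t => pd a f (update x a t) :=
    (continuous_pd hf a).comp (by fun_prop)
  have hshift : update x a 1 = update x a 0 + Pi.single a 1 := by
    ext i; rcases eq_or_ne i a with rfl | h <;> simp [*]
  rw [intervalIntegral.integral_eq_sub_of_hasDerivAt
    (fun t _ => hasDerivAt_pd_update (hf.differentiable one_ne_zero) x a t)
    (hcont.intervalIntegrable _ _), hshift, hper, sub_self]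

end PartialDerivatives

theorem periodic_single_of_update {ι β : Type*} [DecidableEq ι] {f : (ι → ℝ) → β} (a : ι)
    (h : ∀ x, f (update x a (x a + 1)) = f x) : Periodic f (Pi.single a 1) := fun x => by
  rw [← h x]; congr 1
  ext i; rcases eq_or_ne i a with rfl | h <;> simp [*]

section IteratedIntegrals

variable {E : Type*} [NormedAddCommGroup E] [NormedSpace ℝ E]

theorem hasDerivAt_intervalIntegral_of_continuous {F F' : ℝ → ℝ → E} {a b x₀ : ℝ}
    (hF : Continuous (uncurry F)) (hF' : Continuous (uncurry F'))
    (hderiv : ∀ x t, HasDerivAt (F · t) (F' x t) x) :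
    HasDerivAt (fun x => ∫ t in a..b, F x t) (∫ t in a..b, F' x₀ t) x₀ := by
  obtain ⟨C, hC⟩ := ((isCompact_closedBall x₀ 1).prod isCompact_uIcc).exists_bound_of_continuousOn
    hF'.continuousOn
  refine (intervalIntegral.hasDerivAt_integral_of_dominated_loc_of_deriv_le (bound := fun _ => C)
    (Metric.ball_mem_nhds x₀ one_pos) ?_ ((hF.uncurry_left x₀).intervalIntegrable a b)
    (hF'.uncurry_left x₀).aestronglyMeasurable ?_ intervalIntegrable_const ?_).2
  · exact Filter.Eventually.of_forall fun x => (hF.uncurry_left x).aestronglyMeasurable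
  · exact ae_of_all _ fun t ht x hx =>
      hC (x, t) ⟨Metric.ball_subset_closedBall hx, uIoc_subset_uIcc ht⟩
  · exact ae_of_all _ fun t _ x _ => hderiv x t

theorem hasDerivAt_intervalIntegral_intervalIntegral_of_continuous {G G' : ℝ → ℝ → ℝ → E}
    {a b c d s₀ : ℝ} (hG : Continuous fun q : ℝ × ℝ × ℝ => G q.1 q.2.1 q.2.2)
    (hG' : Continuous fun q : ℝ × ℝ × ℝ => G' q.1 q.2.1 q.2.2)
    (hderiv : ∀ s x y, HasDerivAt (G · x y) (G' s x y) s) :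
    HasDerivAt (fun s => ∫ x in a..b, ∫ y in c..d, G s x y)
      (∫ x in a..b, ∫ y in c..d, G' s₀ x y) s₀ := by
  have hcont : ∀ {H : ℝ → ℝ → ℝ → E}, (Continuous fun q : ℝ × ℝ × ℝ => H q.1 q.2.1 q.2.2) →
      Continuous (uncurry fun s x => ∫ y in c..d, H s x y) := fun hH => by
    simp only [uncurry_def]; fun_prop
  refine hasDerivAt_intervalIntegral_of_continuous (hcont hG) (hcont hG') fun s x => ?_
  have hslice : ∀ {H : ℝ → ℝ → ℝ → E}, (Continuous fun q : ℝ × ℝ × ℝ => H q.1 q.2.1 q.2.2) →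
      Continuous (uncurry fun s y => H s x y) := fun hH =>
    hH.comp (by fun_prop : Continuous fun q : ℝ × ℝ => (q.1, x, q.2))
  exact hasDerivAt_intervalIntegral_of_continuous (hslice hG) (hslice hG') fun s y => hderiv s x y

theorem intervalIntegral_intervalIntegral_swap_of_continuous [CompleteSpace E] {F : ℝ → ℝ → E}
    (hF : Continuous (uncurry F)) (a b c d : ℝ) :
    ∫ x in a..b, ∫ y in c..d, F x y = ∫ y in c..d, ∫ x in a..b, F x y :=
  intervalIntegral_intervalIntegral_swap <|
    (hF.continuousOn.integrableOn_compact (isCompact_uIcc.prod isCompact_uIcc)).mono_set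
      (prod_mono uIoc_subset_uIcc uIoc_subset_uIcc)

theorem integral_integral_triangle_swap [CompleteSpace E] {G : ℝ → ℝ → E}
    (hG : Continuous (uncurry G)) {T : ℝ} (hT : 0 ≤ T) :
    ∫ z in 0..T, ∫ u in 0..T - z, G u z = ∫ u in 0..T, ∫ z in 0..T - u, G u z := by
  set H : ℝ → ℝ → E := fun u z => {q : ℝ × ℝ | q.1 + q.2 ≤ T}.indicator (uncurry G) (u, z)
  have hH : IntegrableOn (uncurry H) (uIoc 0 T ×ˢ uIoc 0 T) :=
    ((hG.continuousOn.integrableOn_compact (isCompact_uIcc.prod isCompact_uIcc)).mono_set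
      (prod_mono uIoc_subset_uIcc uIoc_subset_uIcc)).indicator
      (measurableSet_le (by fun_prop) measurable_const)
  have hmem : ∀ {t}, t ∈ uIcc 0 T → T - t ∈ Icc 0 T := fun ht => by
    rw [uIcc_of_le hT] at ht; constructor <;> linarith [ht.1, ht.2]
  calc ∫ z in 0..T, ∫ u in 0..T - z, G u z = ∫ z in 0..T, ∫ u in 0..T, H u z := by
        refine intervalIntegral.integral_congr fun z hz => ?_
        rw [← intervalIntegral.integral_indicator (hmem hz)]
        congr 1; ext u
        simp [H, indicator, le_sub_iff_add_le]
    _ = ∫ u in 0..T, ∫ z in 0..T, H u z := (intervalIntegral_intervalIntegral_swap hH).symm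
    _ = ∫ u in 0..T, ∫ z in 0..T - u, G u z := by
        refine intervalIntegral.integral_congr fun u hu => ?_
        rw [← intervalIntegral.integral_indicator (hmem hu)]
        congr 1; ext z
        simp [H, indicator, le_sub_iff_add_le, add_comm]

/-- Gauss's theorem on the triangle `u, z ≥ 0, u + z ≤ T` for the divergence-free field `(A, B)`. -/
theorem integral_antidiagonal_flux_eq {A B a : ℝ → ℝ → ℝ} (hA : Continuous (uncurry A))
    (hB : Continuous (uncurry B)) (ha : Continuous (uncurry a))
    (hAu : ∀ u z, HasDerivAt (A · z) (a u z) u) (hBz : ∀ u z, HasDerivAt (B u) (-a u z) z)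
    {T : ℝ} (hT : 0 ≤ T) :
    ∫ z in 0..T, (A (T - z) z + B (T - z) z) = (∫ z in 0..T, A 0 z) + ∫ u in 0..T, B u 0 := by
  have hA_line : ∀ z, A (T - z) z = A 0 z + ∫ u in 0..T - z, a u z := fun z => by
    rw [intervalIntegral.integral_eq_sub_of_hasDerivAt (fun u _ => hAu u z)
      ((ha.comp (by fun_prop : Continuous fun u => (u, z))).intervalIntegrable _ _)]
    ring
  have hB_line : ∀ u, B u (T - u) = B u 0 - ∫ z in 0..T - u, a u z := fun u => by
    have := intervalIntegral.integral_eq_sub_of_hasDerivAt (fun z _ => hBz u z)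
      ((ha.comp (by fun_prop : Continuous fun z => (u, z))).neg.intervalIntegrable 0 (T - u))
    rw [intervalIntegral.integral_neg] at this
    linarith
  have hB_sub : ∫ z in 0..T, B (T - z) z = ∫ u in 0..T, B u (T - u) := by
    simpa using intervalIntegral.integral_comp_sub_left (fun u => B u (T - u)) T (a := 0) (b := T)
  have hcont : ∀ {F : ℝ → ℝ → ℝ}, Continuous (uncurry F) → ∀ {φ ψ : ℝ → ℝ}, Continuous φ →
      Continuous ψ → IntervalIntegrable (fun t => F (φ t) (ψ t)) volume 0 T :=
    fun hF _ _ hφ hψ => (hF.comp (hφ.prodMk hψ)).intervalIntegrable 0 T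
  have hIa : Continuous fun z => ∫ u in 0..T - z, a u z := by fun_prop
  have hIa' : Continuous fun u => ∫ z in 0..T - u, a u z := by fun_prop
  calc ∫ z in 0..T, (A (T - z) z + B (T - z) z)
      = (∫ z in 0..T, A (T - z) z) + ∫ u in 0..T, B u (T - u) := by
        rw [intervalIntegral.integral_add (hcont hA (by fun_prop) continuous_id')
          (hcont hB (by fun_prop) continuous_id'), hB_sub]
    _ = ((∫ z in 0..T, A 0 z) + ∫ z in 0..T, ∫ u in 0..T - z, a u z)
        + ((∫ u in 0..T, B u 0) - ∫ u in 0..T, ∫ z in 0..T - u, a u z) := by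
        simp only [hA_line, hB_line]
        rw [intervalIntegral.integral_add (hcont hA continuous_const continuous_id')
          (hIa.intervalIntegrable 0 T), intervalIntegral.integral_sub
          (hcont hB continuous_id' continuous_const) (hIa'.intervalIntegrable 0 T)]
    _ = (∫ z in 0..T, A 0 z) + ∫ u in 0..T, B u 0 := by
        rw [integral_integral_triangle_swap ha hT]; ring

end IteratedIntegrals

noncomputable def sliceIntegral (f : (Fin 4 → ℝ) → ℝ) (u z : ℝ) : ℝ :=
  ∫ x in (0:ℝ)..1, ∫ y in (0:ℝ)..1, f ![u, z, x, y]

section SliceIntegral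

variable {f g : (Fin 4 → ℝ) → ℝ}

theorem continuous_sliceIntegral (hf : Continuous f) : Continuous (uncurry (sliceIntegral f)) := by
  simp only [uncurry_def, sliceIntegral]; fun_prop

theorem sliceIntegral_add (hf : Continuous f) (hg : Continuous g) (u z : ℝ) :
    sliceIntegral (fun p => f p + g p) u z = sliceIntegral f u z + sliceIntegral g u z := by
  have hint : ∀ {φ : ℝ → ℝ}, Continuous φ → IntervalIntegrable φ volume 0 1 :=
    fun hφ => hφ.intervalIntegrable 0 1
  simp only [sliceIntegral]
  rw [← intervalIntegral.integral_add (hint (by fun_prop)) (hint (by fun_prop))]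
  exact intervalIntegral.integral_congr fun x _ =>
    intervalIntegral.integral_add (hint (by fun_prop)) (hint (by fun_prop))

theorem sliceIntegral_const_mul (c : ℝ) (u z : ℝ) :
    sliceIntegral (fun p => c * f p) u z = c * sliceIntegral f u z := by
  simp only [sliceIntegral, intervalIntegral.integral_const_mul]

theorem sliceIntegral_nonneg (hf : ∀ p, 0 ≤ f p) (u z : ℝ) : 0 ≤ sliceIntegral f u z :=
  intervalIntegral.integral_nonneg zero_le_one fun _ _ =>
    intervalIntegral.integral_nonneg zero_le_one fun _ _ => hf _

theorem integral_sliceIntegral_mono (hf : Continuous f) (hg : Continuous g) (hfg : ∀ p, f p ≤ g p)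
    {α β : ℝ → ℝ} (hα : Continuous α) (hβ : Continuous β) {T : ℝ} (hT : 0 ≤ T) :
    ∫ t in 0..T, sliceIntegral f (α t) (β t) ≤ ∫ t in 0..T, sliceIntegral g (α t) (β t) := by
  have hint : ∀ {h : (Fin 4 → ℝ) → ℝ}, Continuous h →
      IntervalIntegrable (fun t => sliceIntegral h (α t) (β t)) volume 0 T := fun hh =>
    ((continuous_sliceIntegral hh).comp (hα.prodMk hβ)).intervalIntegrable 0 T
  have hint' : ∀ {φ : ℝ → ℝ}, Continuous φ → IntervalIntegrable φ volume 0 1 :=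
    fun hφ => hφ.intervalIntegrable 0 1
  refine intervalIntegral.integral_mono_on hT (hint hf) (hint hg) fun t _ => ?_
  exact intervalIntegral.integral_mono_on zero_le_one (hint' (by fun_prop)) (hint' (by fun_prop))
    fun x _ => intervalIntegral.integral_mono_on zero_le_one (hint' (by fun_prop))
      (hint' (by fun_prop)) fun y _ => hfg _

theorem hasDerivAt_sliceIntegral_fst (hf : ContDiff ℝ 1 f) (u z : ℝ) :
    HasDerivAt (sliceIntegral f · z) (sliceIntegral (pd 0 f) u z) u := by
  have hvec : ∀ s x y : ℝ, update (![0, z, x, y] : Fin 4 → ℝ) 0 s = ![s, z, x, y] :=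
    fun s x y => by ext i; fin_cases i <;> rfl
  have hc := hf.continuous; have hc' := continuous_pd hf 0
  exact hasDerivAt_intervalIntegral_intervalIntegral_of_continuous
    (G := fun s x y => f ![s, z, x, y])
    (G' := fun s x y => pd 0 f ![s, z, x, y]) (by fun_prop) (by fun_prop) fun s x y => by
      simpa only [hvec] using hasDerivAt_pd_update (hf.differentiable one_ne_zero) ![0, z, x, y] 0 s

theorem hasDerivAt_sliceIntegral_snd (hf : ContDiff ℝ 1 f) (u z : ℝ) :
    HasDerivAt (sliceIntegral f u) (sliceIntegral (pd 1 f) u z) z := by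
  have hvec : ∀ s x y : ℝ, update (![u, 0, x, y] : Fin 4 → ℝ) 1 s = ![u, s, x, y] :=
    fun s x y => by ext i; fin_cases i <;> rfl
  have hc := hf.continuous; have hc' := continuous_pd hf 1
  exact hasDerivAt_intervalIntegral_intervalIntegral_of_continuous
    (G := fun s x y => f ![u, s, x, y])
    (G' := fun s x y => pd 1 f ![u, s, x, y]) (by fun_prop) (by fun_prop) fun s x y => by
      simpa only [hvec] using hasDerivAt_pd_update (hf.differentiable one_ne_zero) ![u, 0, x, y] 1 s

theorem sliceIntegral_pd_two_eq_zero (hf : ContDiff ℝ 1 f) (hper : Periodic f (Pi.single 2 1))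
    (u z : ℝ) : sliceIntegral (pd 2 f) u z = 0 := by
  have hvec : ∀ x y : ℝ, update (![u, z, 0, y] : Fin 4 → ℝ) 2 x = ![u, z, x, y] :=
    fun x y => by ext i; fin_cases i <;> rfl
  have hc := continuous_pd hf 2
  calc sliceIntegral (pd 2 f) u z
      = ∫ y in (0:ℝ)..1, ∫ x in (0:ℝ)..1, pd 2 f (update ![u, z, 0, y] 2 x) := by
        rw [sliceIntegral, intervalIntegral_intervalIntegral_swap_of_continuous (by
          simp only [uncurry_def]; fun_prop)]
        simp only [hvec]
    _ = 0 := by simp [integral_pd_update_eq_zero hf hper]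

theorem sliceIntegral_pd_three_eq_zero (hf : ContDiff ℝ 1 f) (hper : Periodic f (Pi.single 3 1))
    (u z : ℝ) : sliceIntegral (pd 3 f) u z = 0 := by
  have hvec : ∀ x y : ℝ, update (![u, z, x, 0] : Fin 4 → ℝ) 3 y = ![u, z, x, y] :=
    fun x y => by ext i; fin_cases i <;> rfl
  calc sliceIntegral (pd 3 f) u z
      = ∫ x in (0:ℝ)..1, ∫ y in (0:ℝ)..1, pd 3 f (update ![u, z, x, 0] 3 y) := by
        simp only [sliceIntegral, hvec]
    _ = 0 := by simp [integral_pd_update_eq_zero hf hper]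

end SliceIntegral

theorem integral_flux_balance {eU eZ eX eY : (Fin 4 → ℝ) → ℝ} (hU : ContDiff ℝ 1 eU)
    (hZ : ContDiff ℝ 1 eZ) (hX : ContDiff ℝ 1 eX) (hY : ContDiff ℝ 1 eY)
    (hXper : Periodic eX (Pi.single 2 1)) (hYper : Periodic eY (Pi.single 3 1))
    (hdiv : ∀ x, pd 0 eU x + pd 1 eZ x = pd 2 eX x + pd 3 eY x) {T : ℝ} (hT : 0 ≤ T) :
    ∫ z in 0..T, sliceIntegral (fun x => eU x + eZ x) (T - z) z
      = (∫ z in 0..T, sliceIntegral eU 0 z) + ∫ u in 0..T, sliceIntegral eZ u 0 := by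
  have hcU := continuous_pd hU 0; have hcZ := continuous_pd hZ 1
  have hcX := continuous_pd hX 2; have hcY := continuous_pd hY 3
  have hslice : ∀ u z, sliceIntegral (pd 1 eZ) u z = -sliceIntegral (pd 0 eU) u z := by
    intro u z
    have h := congrArg (sliceIntegral · u z) (funext hdiv)
    simp only [sliceIntegral_add hcU hcZ, sliceIntegral_add hcX hcY,
      sliceIntegral_pd_two_eq_zero hX hXper, sliceIntegral_pd_three_eq_zero hY hYper] at h
    linarith
  rw [← integral_antidiagonal_flux_eq (continuous_sliceIntegral hU.continuous)
    (continuous_sliceIntegral hZ.continuous) (continuous_sliceIntegral hcU)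
    (hasDerivAt_sliceIntegral_fst hU)
    (fun u z => (hasDerivAt_sliceIntegral_snd hZ u z).congr_deriv (hslice u z)) hT]
  exact intervalIntegral.integral_congr fun z _ =>
    sliceIntegral_add hU.continuous hZ.continuous (T - z) z

/-- The coordinates `(u, z, x, y)` are the indices `0, 1, 2, 3`. -/
structure NullPlaneSystem (r p q : (Fin 4 → ℝ) → ℝ) : Prop where
  du_r : ∀ x, 2 * pd 0 r x = pd 2 p x + pd 3 q x + pd 1 r x
  dz_p : ∀ x, pd 1 p x = pd 2 r x
  dz_q : ∀ x, pd 1 q x = pd 3 r x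

namespace NullPlaneSystem

variable {r p q : (Fin 4 → ℝ) → ℝ}

theorem energy_conservation (h : NullPlaneSystem r p q) (hr : Differentiable ℝ r)
    (hp : Differentiable ℝ p) (hq : Differentiable ℝ q) (x : Fin 4 → ℝ) :
    pd 0 (fun y => 2 * r y ^ 2) x + pd 1 (fun y => p y ^ 2 + q y ^ 2 - r y ^ 2) x
      = pd 2 (fun y => 2 * r y * p y) x + pd 3 (fun y => 2 * r y * q y) x := by
  simp (disch := fun_prop) only [pd_fun_add, pd_fun_sub, pd_fun_mul, pd_fun_sq, pd_const]
  linear_combination (2 * r x) * h.du_r x + (2 * p x) * h.dz_p x + (2 * q x) * h.dz_q x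

theorem derived (h : NullPlaneSystem r p q) (hr : ContDiff ℝ 2 r) (hp : ContDiff ℝ 2 p)
    (hq : ContDiff ℝ 2 q) (a : Fin 4) : NullPlaneSystem (pd a r) (pd a p) (pd a q) := by
  have hr' := differentiable_pd hr; have hp' := differentiable_pd hp
  have hq' := differentiable_pd hq
  refine ⟨fun x => ?_, fun x => ?_, fun x => ?_⟩
  · have h' := congrArg (pd a · x) (funext h.du_r)
    simp (disch := fun_prop) only [pd_fun_add, pd_fun_mul, pd_const] at h'
    rw [pd_comm hr a 0, pd_comm hp a 2, pd_comm hq a 3, pd_comm hr a 1] at h'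
    linarith
  · rw [← pd_comm hp a 1, ← pd_comm hr a 2]
    exact congrArg (pd a · x) (funext h.dz_p)
  · rw [← pd_comm hq a 1, ← pd_comm hr a 3]
    exact congrArg (pd a · x) (funext h.dz_q)

variable {R P Q : (Fin 4 → ℝ) → ℝ}

theorem derivative_energy_identity (h : NullPlaneSystem R P Q) (hR : ContDiff ℝ 2 R)
    (hP : ContDiff ℝ 2 P) (hQ : ContDiff ℝ 2 Q) (hRx : Periodic R (Pi.single 2 1))
    (hRy : Periodic R (Pi.single 3 1)) (hPx : Periodic P (Pi.single 2 1))
    (hQy : Periodic Q (Pi.single 3 1)) {T : ℝ} (hT : 0 ≤ T) :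
    ∫ z in 0..T, sliceIntegral (fun x => 2 * pd 2 R x ^ 2 + 2 * pd 3 R x ^ 2 + pd 1 R x ^ 2
        + pd 2 P x ^ 2 + pd 2 Q x ^ 2 + pd 3 P x ^ 2 + pd 3 Q x ^ 2) (T - z) z
      = 2 * (∫ z in 0..T, sliceIntegral (fun x => pd 2 R x ^ 2 + pd 3 R x ^ 2 + pd 1 R x ^ 2) 0 z)
        + ∫ u in 0..T, sliceIntegral (fun x => -pd 1 R x ^ 2 + pd 2 P x ^ 2 + pd 2 Q x ^ 2
          + pd 3 P x ^ 2 + pd 3 Q x ^ 2) u 0 := by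
  have hR1 := contDiff_pd (m := 1) hR le_rfl; have hP1 := contDiff_pd (m := 1) hP le_rfl
  have hQ1 := contDiff_pd (m := 1) hQ le_rfl
  have hRd := differentiable_pd hR; have hPd := differentiable_pd hP
  have hQd := differentiable_pd hQ
  have hRx' : ∀ a x, pd a R (x + Pi.single 2 1) = pd a R x := fun a => periodic_pd hRx a
  have hRy' : ∀ a x, pd a R (x + Pi.single 3 1) = pd a R x := fun a => periodic_pd hRy a
  have hPx' : ∀ a x, pd a P (x + Pi.single 2 1) = pd a P x := fun a => periodic_pd hPx a
  have hQy' : ∀ a x, pd a Q (x + Pi.single 3 1) = pd a Q x := fun a => periodic_pd hQy a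
  have hlaw := fun a => (h.derived hR hP hQ a).energy_conservation (hRd a) (hPd a) (hQd a)
  -- the sum over `a = z, x, y` of the conserved currents of the triples `(∂ₐR, ∂ₐP, ∂ₐQ)`
  have key := integral_flux_balance
    (eU := fun x => 2 * pd 1 R x ^ 2 + 2 * pd 2 R x ^ 2 + 2 * pd 3 R x ^ 2)
    (eZ := fun x => (pd 1 P x ^ 2 + pd 1 Q x ^ 2 - pd 1 R x ^ 2)
      + (pd 2 P x ^ 2 + pd 2 Q x ^ 2 - pd 2 R x ^ 2) + (pd 3 P x ^ 2 + pd 3 Q x ^ 2 - pd 3 R x ^ 2))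
    (eX := fun x => 2 * pd 1 R x * pd 1 P x + 2 * pd 2 R x * pd 2 P x + 2 * pd 3 R x * pd 3 P x)
    (eY := fun x => 2 * pd 1 R x * pd 1 Q x + 2 * pd 2 R x * pd 2 Q x + 2 * pd 3 R x * pd 3 Q x)
    (by fun_prop) (by fun_prop) (by fun_prop) (by fun_prop)
    (fun x => by simp only [hRx', hPx']) (fun x => by simp only [hRy', hQy'])
    (fun x => by
      simp (disch := fun_prop) only [pd_fun_add]
      linarith [hlaw 1 x, hlaw 2 x, hlaw 3 x]) hT
  convert key using 3
  · congr 1; funext x; rw [h.dz_p x, h.dz_q x]; ring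
  · rw [← intervalIntegral.integral_const_mul]
    refine intervalIntegral.integral_congr fun z _ => ?_
    rw [← sliceIntegral_const_mul]; congr 1; funext x; ring
  · funext u; congr 1; funext x; rw [h.dz_p x, h.dz_q x]; ring

theorem derivative_energy_estimate (h : NullPlaneSystem R P Q) (hR : ContDiff ℝ 2 R)
    (hP : ContDiff ℝ 2 P) (hQ : ContDiff ℝ 2 Q) (hRx : Periodic R (Pi.single 2 1))
    (hRy : Periodic R (Pi.single 3 1)) (hPx : Periodic P (Pi.single 2 1))
    (hQy : Periodic Q (Pi.single 3 1)) {T : ℝ} (hT : 0 ≤ T) :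
    ∫ z in 0..T, sliceIntegral (fun x => pd 2 R x ^ 2 + pd 3 R x ^ 2 + pd 1 R x ^ 2
        + pd 2 P x ^ 2 + pd 2 Q x ^ 2 + pd 3 P x ^ 2 + pd 3 Q x ^ 2) (T - z) z
      ≤ 2 * ((∫ z in 0..T, sliceIntegral (fun x => pd 2 R x ^ 2 + pd 3 R x ^ 2 + pd 1 R x ^ 2) 0 z)
        + ∫ u in 0..T, sliceIntegral (fun x => pd 2 P x ^ 2 + pd 2 Q x ^ 2
          + pd 3 P x ^ 2 + pd 3 Q x ^ 2) u 0) := by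
  have hRc := fun a => (differentiable_pd hR a).continuous
  have hPc := fun a => (differentiable_pd hP a).continuous
  have hQc := fun a => (differentiable_pd hQ a).continuous
  have hz_bound := integral_sliceIntegral_mono
    (f := fun x => -pd 1 R x ^ 2 + pd 2 P x ^ 2 + pd 2 Q x ^ 2 + pd 3 P x ^ 2 + pd 3 Q x ^ 2)
    (g := fun x => pd 2 P x ^ 2 + pd 2 Q x ^ 2 + pd 3 P x ^ 2 + pd 3 Q x ^ 2)
    (by fun_prop) (by fun_prop) (fun x => by linarith [sq_nonneg (pd 1 R x)])
    (α := fun u => u) (β := fun _ => 0) continuous_id' continuous_const hT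
  have hz_nonneg : 0 ≤ ∫ u in 0..T, sliceIntegral (fun x => pd 2 P x ^ 2 + pd 2 Q x ^ 2
      + pd 3 P x ^ 2 + pd 3 Q x ^ 2) u 0 :=
    intervalIntegral.integral_nonneg hT fun u _ => sliceIntegral_nonneg (fun x => by positivity) u 0
  calc _ ≤ _ := integral_sliceIntegral_mono (by fun_prop) (by fun_prop)
        (fun x => by linarith [sq_nonneg (pd 2 R x), sq_nonneg (pd 3 R x)])
        (continuous_sub_left T) continuous_id' hT
    _ = _ := h.derivative_energy_identity hR hP hQ hRx hRy hPx hQy hT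
    _ ≤ _ := by linarith

end NullPlaneSystem

/-- Energy identity and estimate for the derivatives in the null-plane
characteristic problem. Coordinates `(u,z,x,y)` are indices `0,1,2,3`; the C³
fields are periodic in `x,y` and satisfy `2R_u = P_x + Q_y + R_z`, `P_z = R_x`,
`Q_z = R_y`. Then the flux identity for
`w = (R_x,R_y,R_z,P_x,Q_x,P_y,Q_y)` holds, and consequently the norm of `w`
on `{u+z=T}` is bounded by twice the derivative data integrals. -/
theorem stmt_11 (R P Q : (Fin 4 → ℝ) → ℝ)
    (hR : ContDiff ℝ 3 R) (hP : ContDiff ℝ 3 P) (hQ : ContDiff ℝ 3 Q)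
    (hperx : ∀ p : Fin 4 → ℝ, R (Function.update p 2 (p 2 + 1)) = R p ∧
      P (Function.update p 2 (p 2 + 1)) = P p ∧
      Q (Function.update p 2 (p 2 + 1)) = Q p)
    (hpery : ∀ p : Fin 4 → ℝ, R (Function.update p 3 (p 3 + 1)) = R p ∧
      P (Function.update p 3 (p 3 + 1)) = P p ∧
      Q (Function.update p 3 (p 3 + 1)) = Q p)
    (e1 : ∀ p : Fin 4 → ℝ, 2 * pd 0 R p = pd 2 P p + pd 3 Q p + pd 1 R p)
    (e2 : ∀ p : Fin 4 → ℝ, pd 1 P p = pd 2 R p)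
    (e3 : ∀ p : Fin 4 → ℝ, pd 1 Q p = pd 3 R p) :
    ∀ T : ℝ, 0 < T →
      ((∫ z in (0:ℝ)..T, ∫ x in (0:ℝ)..1, ∫ y in (0:ℝ)..1,
          (2 * pd 2 R ![T - z, z, x, y] ^ 2 + 2 * pd 3 R ![T - z, z, x, y] ^ 2
            + pd 1 R ![T - z, z, x, y] ^ 2 + pd 2 P ![T - z, z, x, y] ^ 2
            + pd 2 Q ![T - z, z, x, y] ^ 2 + pd 3 P ![T - z, z, x, y] ^ 2
            + pd 3 Q ![T - z, z, x, y] ^ 2))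
        = 2 * (∫ z in (0:ℝ)..T, ∫ x in (0:ℝ)..1, ∫ y in (0:ℝ)..1,
            (pd 2 R ![0, z, x, y] ^ 2 + pd 3 R ![0, z, x, y] ^ 2
              + pd 1 R ![0, z, x, y] ^ 2))
          + (∫ u in (0:ℝ)..T, ∫ x in (0:ℝ)..1, ∫ y in (0:ℝ)..1,
            (-pd 1 R ![u, 0, x, y] ^ 2 + pd 2 P ![u, 0, x, y] ^ 2
              + pd 2 Q ![u, 0, x, y] ^ 2 + pd 3 P ![u, 0, x, y] ^ 2
              + pd 3 Q ![u, 0, x, y] ^ 2)))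
      ∧
      ((∫ z in (0:ℝ)..T, ∫ x in (0:ℝ)..1, ∫ y in (0:ℝ)..1,
          (pd 2 R ![T - z, z, x, y] ^ 2 + pd 3 R ![T - z, z, x, y] ^ 2
            + pd 1 R ![T - z, z, x, y] ^ 2 + pd 2 P ![T - z, z, x, y] ^ 2
            + pd 2 Q ![T - z, z, x, y] ^ 2 + pd 3 P ![T - z, z, x, y] ^ 2
            + pd 3 Q ![T - z, z, x, y] ^ 2))
        ≤ 2 * ((∫ z in (0:ℝ)..T, ∫ x in (0:ℝ)..1, ∫ y in (0:ℝ)..1,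
            (pd 2 R ![0, z, x, y] ^ 2 + pd 3 R ![0, z, x, y] ^ 2
              + pd 1 R ![0, z, x, y] ^ 2))
          + (∫ u in (0:ℝ)..T, ∫ x in (0:ℝ)..1, ∫ y in (0:ℝ)..1,
            (pd 2 P ![u, 0, x, y] ^ 2 + pd 2 Q ![u, 0, x, y] ^ 2
              + pd 3 P ![u, 0, x, y] ^ 2 + pd 3 Q ![u, 0, x, y] ^ 2)))) := by
  intro T hT
  have hsys : NullPlaneSystem R P Q := ⟨e1, e2, e3⟩
  have h23 : (2 : WithTop ℕ∞) ≤ 3 := by norm_num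
  have hRx := periodic_single_of_update 2 fun p => (hperx p).1
  have hPx := periodic_single_of_update 2 fun p => (hperx p).2.1
  have hRy := periodic_single_of_update 3 fun p => (hpery p).1
  have hQy := periodic_single_of_update 3 fun p => (hpery p).2.2
  exact ⟨hsys.derivative_energy_identity (hR.of_le h23) (hP.of_le h23) (hQ.of_le h23)
      hRx hRy hPx hQy hT.le,
    hsys.derivative_energy_estimate (hR.of_le h23) (hP.of_le h23) (hQ.of_le h23)
      hRx hRy hPx hQy hT.le⟩
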